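/- arXiv:math/0510634 — 5 statements merged into one kernel-verified Lean document; each statement's English description precedes it below -/
import Mathlib

section
/- Let T be a linear isometry of the real quadratic form x₁² + ⋯ + x_p² − x_{p+1}² − ⋯ − x_{p+q}² of signature (p, q). Then T has at most min(p, q) eigenvalues (over ℂ, counted with multiplicity) of absolute value strictly greater than 1, and at most min(p,q) of absolute value strictly less than 1; in particular at most 2·min(p,q) eigenvalues outside the unit circle, counted with multiplicity. -/
/-!
Complexify `T`: it preserves the hermitian form `∑ ε i * conj (v i) * w i` of signature `(p, q)`,
where `ε = indefiniteSign p q`. For an isometry, generalized eigenvectors for eigenvalues `a`, `b`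
with `conj a * b ≠ 1` are orthogonal, so the sum of the generalized eigenspaces for all
eigenvalues of modulus `> 1` (or all of modulus `< 1`) is totally isotropic. A totally isotropic
subspace meets the positive definite span of the first `p` coordinates, and the negative definite
span of the last `q`, only in `0`, so its dimension, which counts those eigenvalues with algebraic
multiplicity, is at most `min p q`.
-/

open Matrix Module

namespace Matrix

variable {ι R : Type*} [Fintype ι] [CommRing R] [StarRing R]

def sesqForm (M : Matrix ι ι R) : (ι → R) →ₗ⋆[R] (ι → R) →ₗ[R] R :=
  LinearMap.mk₂'ₛₗ (starRingEnd R) (RingHom.id R) (fun v w => star v ⬝ᵥ (M *ᵥ w))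
    (by simp [add_dotProduct]) (by simp [smul_dotProduct, starRingEnd_apply])
    (by simp [mulVec_add, dotProduct_add]) (by simp [mulVec_smul])

@[simp]
theorem sesqForm_apply (M : Matrix ι ι R) (v w : ι → R) :
    sesqForm M v w = star v ⬝ᵥ (M *ᵥ w) := rfl

theorem sesqForm_mulVec_mulVec (M A : Matrix ι ι R) (v w : ι → R) :
    sesqForm M (A *ᵥ v) (A *ᵥ w) = sesqForm (Aᴴ * M * A) v w := by
  simp only [sesqForm_apply, star_mulVec, ← mulVec_mulVec, dotProduct_mulVec, vecMul_vecMul]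

theorem sesqForm_map_diagonal_self {𝕜 : Type*} [RCLike 𝕜] [DecidableEq ι] (ε : ι → ℝ)
    (v : ι → 𝕜) :
    sesqForm ((diagonal ε).map (algebraMap ℝ 𝕜)) v v = ((∑ i, ε i * ‖v i‖ ^ 2 : ℝ) : 𝕜) := by
  rw [diagonal_map (map_zero _), sesqForm_apply, dotProduct]
  push_cast
  refine Finset.sum_congr rfl fun i _ => ?_
  rw [mulVec_diagonal, Pi.star_apply, RCLike.star_def, ← RCLike.conj_mul]
  simp only [RCLike.algebraMap_eq_ofReal]
  ring

theorem conjTranspose_map_algebraMap {m n 𝕜 : Type*} [RCLike 𝕜] (A : Matrix m n ℝ) :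
    (A.map (algebraMap ℝ 𝕜))ᴴ = Aᵀ.map (algebraMap ℝ 𝕜) := by
  rw [← conjTranspose_eq_transpose_of_trivial,
    conjTranspose_map _ fun x => algebraMap_star_comm x]

end Matrix

namespace Module.End

variable {K V : Type*} [Field K] [StarRing K] [AddCommGroup V] [Module K V]
  {B : V →ₗ⋆[K] V →ₗ[K] K} {f : End K V}

theorem apply_eq_zero_of_mem_maxGenEigenspace (hf : ∀ x y, B (f x) (f y) = B x y)
    {a b : K} (hab : star a * b ≠ 1) {x y : V} (hx : x ∈ f.maxGenEigenspace a)
    (hy : y ∈ f.maxGenEigenspace b) : B x y = 0 := by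
  obtain ⟨k, hk⟩ := (mem_maxGenEigenspace f a x).1 hx
  obtain ⟨l, hl⟩ := (mem_maxGenEigenspace f b y).1 hy
  clear hx hy
  induction k generalizing x l y with
  | zero => simp_all
  | succ k ihk =>
    induction l generalizing y with
    | zero => simp_all
    | succ l ihl =>
      set x' := (f - a • 1) x
      set y' := (f - b • 1) y
      have hx' : ((f - a • 1) ^ k) x' = 0 := by rwa [← mul_apply, ← pow_succ]
      have hy' : ((f - b • 1) ^ l) y' = 0 := by rwa [← mul_apply, ← pow_succ]
      have hfx : f x = a • x + x' := by simp [x']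
      have hfy : f y = b • y + y' := by simp [y']
      -- the cross terms vanish by induction, leaving `B x y = star a * b * B x y`
      have key := hf x y
      rw [hfx, hfy] at key
      simp only [map_add, map_smulₛₗ, LinearMap.add_apply, LinearMap.smul_apply, ihl hy',
        ihk hx' _ hl, ihk hx' _ hy', smul_eq_mul, RingHom.id_apply, starRingEnd_apply] at key
      have : (star a * b - 1) * B x y = 0 := by linear_combination key
      exact (mul_eq_zero.1 this).resolve_left (sub_ne_zero.2 hab)

theorem apply_eq_zero_of_mem_iSup_maxGenEigenspace (hf : ∀ x y, B (f x) (f y) = B x y)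
    {P : K → Prop} (hP : ∀ a b, P a → P b → star a * b ≠ 1) {x y : V}
    (hx : x ∈ ⨆ (a) (_ : P a), f.maxGenEigenspace a)
    (hy : y ∈ ⨆ (b) (_ : P b), f.maxGenEigenspace b) : B x y = 0 := by
  have hle : (⨆ (a) (_ : P a), f.maxGenEigenspace a) ≤ LinearMap.ker (B.flip y) := by
    refine iSup₂_le fun a ha x hx => ?_
    have hle' : (⨆ (b) (_ : P b), f.maxGenEigenspace b) ≤ LinearMap.ker (B x) :=
      iSup₂_le fun b hb y hy => apply_eq_zero_of_mem_maxGenEigenspace hf (hP a b ha hb) hx hy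
    exact hle' hy
  exact hle hx

end Module.End

theorem iSupIndep.finrank_biSup_eq_sum {K V ι : Type*} [DivisionRing K] [AddCommGroup V]
    [Module K V] [FiniteDimensional K V] [DecidableEq ι] {p : ι → Submodule K V}
    (hp : iSupIndep p) (s : Finset ι) :
    finrank K ↥(⨆ i ∈ s, p i) = ∑ i ∈ s, finrank K (p i) := by
  induction s using Finset.induction_on with
  | empty => simp
  | insert i s hi ih =>
    have hdisj : Disjoint (p i) (⨆ j ∈ s, p j) := hp.disjoint_biSup (by simpa using hi)
    rw [Finset.iSup_insert, Finset.sum_insert hi, ← ih,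
      ← Submodule.finrank_sup_add_finrank_inf_eq, hdisj.eq_bot, finrank_bot, add_zero]

theorem Module.End.card_roots_filter_charpoly_le_finrank {K V : Type*} [Field K]
    [AddCommGroup V] [Module K V] [FiniteDimensional K V] (f : End K V) (P : K → Prop)
    [DecidablePred P] :
    Multiset.card (f.charpoly.roots.filter P) ≤
      finrank K ↥(⨆ (a) (_ : P a), f.maxGenEigenspace a) := by
  classical
  set F := (f.charpoly.roots.filter P).toFinset
  have hFP : ∀ a ∈ F, P a := fun a ha => (Multiset.mem_filter.1 (Multiset.mem_toFinset.1 ha)).2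
  calc Multiset.card (f.charpoly.roots.filter P)
      = ∑ a ∈ F, f.charpoly.rootMultiplicity a := by
        rw [← Multiset.toFinset_sum_count_eq]
        refine Finset.sum_congr rfl fun a ha => ?_
        rw [Multiset.count_filter_of_pos (hFP a ha), Polynomial.count_roots]
    _ = finrank K ↥(⨆ a ∈ F, f.maxGenEigenspace a) := by
        simp only [(independent_maxGenEigenspace f).finrank_biSup_eq_sum,
          LinearMap.finrank_maxGenEigenspace_eq]
    _ ≤ finrank K ↥(⨆ (a) (_ : P a), f.maxGenEigenspace a) :=
        Submodule.finrank_mono (iSup₂_le fun a ha => le_iSup₂_of_le a (hFP a ha) le_rfl)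

section Signature

variable {ι 𝕜 : Type*} [Fintype ι] [RCLike 𝕜]

theorem finrank_le_card_nonpos_of_isotropic (ε : ι → ℝ) {W : Submodule 𝕜 (ι → 𝕜)}
    (hW : ∀ v ∈ W, ∑ i, ε i * ‖v i‖ ^ 2 = 0) :
    finrank 𝕜 W ≤ Fintype.card {i // ε i ≤ 0} := by
  let restrict := (LinearMap.funLeft 𝕜 𝕜 (Subtype.val : {i // ε i ≤ 0} → ι)).comp W.subtype
  have hinj : Function.Injective restrict := by
    refine (injective_iff_map_eq_zero restrict).2 fun v hv => ?_
    have hvanish : ∀ i, ε i ≤ 0 → (v : ι → 𝕜) i = 0 := fun i hi => congrFun hv ⟨i, hi⟩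
    have hterm : ∀ i, 0 ≤ ε i * ‖(v : ι → 𝕜) i‖ ^ 2 := fun i => by
      rcases le_or_gt (ε i) 0 with hi | hi
      · simp [hvanish i hi]
      · positivity
    have hzero := (Finset.sum_eq_zero_iff_of_nonneg fun i _ => hterm i).1 (hW v v.2)
    ext i
    rcases le_or_gt (ε i) 0 with hi | hi
    · exact hvanish i hi
    · simpa [hi.ne'] using hzero i (Finset.mem_univ i)
  simpa using LinearMap.finrank_le_finrank_of_injective hinj

theorem finrank_le_card_nonneg_of_isotropic (ε : ι → ℝ) {W : Submodule 𝕜 (ι → 𝕜)}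
    (hW : ∀ v ∈ W, ∑ i, ε i * ‖v i‖ ^ 2 = 0) :
    finrank 𝕜 W ≤ Fintype.card {i // 0 ≤ ε i} := by
  simpa using finrank_le_card_nonpos_of_isotropic (-ε) (W := W) fun v hv => by simp [hW v hv]

end Signature

def indefiniteSign (p q : ℕ) (i : Fin (p + q)) : ℝ :=
  if (i : ℕ) < p then 1 else -1

theorem card_indefiniteSign_nonpos (p q : ℕ) :
    Fintype.card {i // indefiniteSign p q i ≤ 0} = q := by
  have h (i : Fin (p + q)) : indefiniteSign p q i ≤ 0 ↔ ¬ (i : ℕ) < p := by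
    unfold indefiniteSign; split_ifs <;> norm_num [*]
  rw [Fintype.card_subtype]
  simp only [h, Finset.filter_not, Finset.card_sdiff_of_subset (Finset.filter_subset _ _),
    Fin.card_filter_val_lt, Finset.card_univ, Fintype.card_fin]
  omega

theorem card_indefiniteSign_nonneg (p q : ℕ) :
    Fintype.card {i // 0 ≤ indefiniteSign p q i} = p := by
  have h (i : Fin (p + q)) : 0 ≤ indefiniteSign p q i ↔ (i : ℕ) < p := by
    unfold indefiniteSign; split_ifs <;> norm_num [*]
  rw [Fintype.card_subtype]
  simp only [h, Fin.card_filter_val_lt]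
  omega

theorem card_roots_filter_charpoly_le_min {p q : ℕ} {T : Matrix (Fin (p + q)) (Fin (p + q)) ℝ}
    (hT : Tᵀ * diagonal (indefiniteSign p q) * T = diagonal (indefiniteSign p q))
    (P : ℂ → Prop) [DecidablePred P] (hP : ∀ a b : ℂ, P a → P b → star a * b ≠ 1) :
    Multiset.card ((T.map (algebraMap ℝ ℂ)).charpoly.roots.filter P) ≤ min p q := by
  set S := T.map (algebraMap ℝ ℂ)
  set J := (diagonal (indefiniteSign p q)).map (algebraMap ℝ ℂ)
  have hS : Sᴴ * J * S = J := by
    rw [conjTranspose_map_algebraMap, ← Matrix.map_mul, ← Matrix.map_mul, hT]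
  set f : End ℂ (Fin (p + q) → ℂ) := toLin' S
  have hf (x y) : sesqForm J (f x) (f y) = sesqForm J x y := by
    rw [toLin'_apply, toLin'_apply, sesqForm_mulVec_mulVec, hS]
  set W := ⨆ (a) (_ : P a), f.maxGenEigenspace a
  have hW (v) (hv : v ∈ W) : ∑ i, indefiniteSign p q i * ‖v i‖ ^ 2 = 0 := by
    have := Module.End.apply_eq_zero_of_mem_iSup_maxGenEigenspace hf hP hv hv
    rwa [sesqForm_map_diagonal_self, RCLike.ofReal_eq_zero] at this
  calc Multiset.card (S.charpoly.roots.filter P)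
      = Multiset.card (f.charpoly.roots.filter P) := by rw [charpoly_toLin']
    _ ≤ finrank ℂ W := f.card_roots_filter_charpoly_le_finrank P
    _ ≤ min p q := by
        refine le_min ?_ ?_
        · simpa only [card_indefiniteSign_nonneg] using finrank_le_card_nonneg_of_isotropic _ hW
        · simpa only [card_indefiniteSign_nonpos] using finrank_le_card_nonpos_of_isotropic _ hW

theorem Multiset.card_filter_ne_eq_add {α β : Type*} [LinearOrder β] (s : Multiset α)
    (g : α → β) (c : β) :
    card (s.filter (g · ≠ c)) = card (s.filter (g · < c)) + card (s.filter (c < g ·)) := by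
  rw [← card_add, ← filter_add_not (g · < c) (s.filter (g · ≠ c)), filter_filter, filter_filter]
  congr 2 <;> refine filter_congr fun x _ => ?_
  · exact ⟨And.left, fun h => ⟨h, h.ne⟩⟩
  · exact ⟨fun h => lt_of_le_of_ne (not_lt.1 h.1) h.2.symm, fun h => ⟨h.not_gt, h.ne'⟩⟩

theorem star_mul_ne_one_of_one_lt_norm {𝕜 : Type*} [NormedDivisionRing 𝕜] [StarRing 𝕜]
    [NormedStarGroup 𝕜] {a b : 𝕜} (ha : 1 < ‖a‖) (hb : 1 < ‖b‖) :
    star a * b ≠ 1 := by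
  intro h
  have := congrArg norm h
  rw [norm_mul, norm_star, norm_one] at this
  nlinarith

theorem star_mul_ne_one_of_norm_lt_one {𝕜 : Type*} [NormedDivisionRing 𝕜] [StarRing 𝕜]
    [NormedStarGroup 𝕜] {a b : 𝕜} (ha : ‖a‖ < 1) (hb : ‖b‖ < 1) :
    star a * b ≠ 1 := by
  intro h
  have := congrArg norm h
  rw [norm_mul, norm_star, norm_one] at this
  nlinarith [norm_nonneg a, norm_nonneg b]

/-- **McMullen's Lemma 3.1.** Let `T` be a linear isometry of the real quadratic form
`x₁² + ⋯ + x_p² − x_{p+1}² − ⋯ − x_{p+q}²` of signature `(p, q)`, i.e. `Tᵀ J T = J` where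
`J` is the corresponding diagonal Gram matrix. Then `T` has at most `min p q` complex
eigenvalues (counted with algebraic multiplicity, i.e. as roots of the characteristic
polynomial over `ℂ`) of absolute value `> 1`, at most `min p q` of absolute value `< 1`,
and hence at most `2 * min p q` eigenvalues outside the unit circle. -/
theorem eigenvalues_of_indefinite_isometry (p q : ℕ)
    (T : Matrix (Fin (p + q)) (Fin (p + q)) ℝ)
    (hT : Tᵀ * Matrix.diagonal (fun i : Fin (p + q) => if (i : ℕ) < p then (1 : ℝ) else -1) * T =
      Matrix.diagonal (fun i : Fin (p + q) => if (i : ℕ) < p then (1 : ℝ) else -1)) :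
    Multiset.card (((T.map (algebraMap ℝ ℂ)).charpoly.roots).filter
        (fun z => 1 < ‖z‖)) ≤ min p q ∧
    Multiset.card (((T.map (algebraMap ℝ ℂ)).charpoly.roots).filter
        (fun z => ‖z‖ < 1)) ≤ min p q ∧
    Multiset.card (((T.map (algebraMap ℝ ℂ)).charpoly.roots).filter
        (fun z => ‖z‖ ≠ 1)) ≤ 2 * min p q := by
  have hout := card_roots_filter_charpoly_le_min hT (fun z => 1 < ‖z‖) fun _ _ =>
    star_mul_ne_one_of_one_lt_norm
  have hin := card_roots_filter_charpoly_le_min hT (fun z => ‖z‖ < 1) fun _ _ =>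
    star_mul_ne_one_of_norm_lt_one
  refine ⟨hout, hin, ?_⟩
  rw [Multiset.card_filter_ne_eq_add]
  omega
end

section
/- Let f : V → V be a linear isometry of a real vector space with bilinear form of signature (1, n-1), λ > 1, with nonzero ν₊, ν₋ satisfying f(ν₊) = λν₊, f(ν₋) = λ⁻¹ν₋, (ν₊, ν₊) = (ν₋, ν₋) = 0, and (ν₊, ν₋) > 0. Let C ∈ V satisfy (C, ν₊) ≥ 0 and (C, ν₋) ≥ 0. If (C, ν₊ + ν₋) = (fⁿ C, ν₊ + ν₋) for all integers n, then (C, ν₊) = 0 and (C, ν₋) = 0. -/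
/-- The Lorentzian (Minkowski) bilinear form of signature `(1, m)` on `ℝ × (Fin m → ℝ)`,
a model for a symmetric bilinear form of signature `(1, n-1)` on an `n`-dimensional
real vector space. -/
noncomputable def lor {m : ℕ} (x y : ℝ × (Fin m → ℝ)) : ℝ :=
  x.1 * y.1 - ∑ i, x.2 i * y.2 i

/-- The positive cone: the connected component of `{x | lor x x > 0}` containing
vectors with positive first coordinate. -/
def posCone (m : ℕ) : Set (ℝ × (Fin m → ℝ)) :=
  {x | 0 < lor x x ∧ 0 < x.1}


lemma lor_add_right {m : ℕ} (x y z : ℝ × (Fin m → ℝ)) :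
    lor x (y + z) = lor x y + lor x z := by
  simp [lor, mul_add, Finset.sum_add_distrib]; ring

lemma lor_smul_right {m : ℕ} (c : ℝ) (x y : ℝ × (Fin m → ℝ)) :
    lor x (c • y) = c * lor x y := by
  simp only [lor, Prod.smul_fst, Prod.smul_snd, smul_eq_mul, Pi.smul_apply,
    Finset.mul_sum]
  rw [mul_sub, Finset.mul_sum]
  congr 1
  · ring
  · exact Finset.sum_congr rfl fun i _ => by ring

/-- Key computation for periodic curves: let `f` be an invertible linear isometry of the
Lorentzian form of signature `(1, n-1)`, `λ > 1`, with nonzero isotropic eigenvectors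
`ν₊, ν₋` (`f ν₊ = λ ν₊`, `f ν₋ = λ⁻¹ ν₋`, `(ν₊,ν₊) = (ν₋,ν₋) = 0`, `(ν₊,ν₋) > 0`).
If `C` satisfies `(C, ν₊) ≥ 0`, `(C, ν₋) ≥ 0` and `(C, ν₊ + ν₋) = (fⁿ C, ν₊ + ν₋)` for
all integers `n`, then `(C, ν₊) = 0` and `(C, ν₋) = 0`. -/
theorem pairing_eq_zero_of_invariant {m : ℕ}
    (f : (ℝ × (Fin m → ℝ)) ≃ₗ[ℝ] (ℝ × (Fin m → ℝ)))
    (hf : ∀ x y, lor (f x) (f y) = lor x y)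
    (l : ℝ) (hl : 1 < l)
    (νp νm : ℝ × (Fin m → ℝ)) (hνp0 : νp ≠ 0) (hνm0 : νm ≠ 0)
    (hfp : f νp = l • νp) (hfm : f νm = l⁻¹ • νm)
    (hp2 : lor νp νp = 0) (hm2 : lor νm νm = 0) (hpm : 0 < lor νp νm)
    (C : ℝ × (Fin m → ℝ)) (hCp : 0 ≤ lor C νp) (hCm : 0 ≤ lor C νm)
    (hinv : ∀ n : ℤ, lor C (νp + νm) = lor ((f ^ n) C) (νp + νm)) :
    lor C νp = 0 ∧ lor C νm = 0 := by
  -- proof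
  have hl0 : (0:ℝ) < l := lt_trans one_pos hl
  have key : ∀ x : ℝ × (Fin m → ℝ), lor (f x) νp = l⁻¹ * lor x νp ∧
      lor (f x) νm = l * lor x νm := by
    intro x
    constructor
    · have h := hf x νp
      rw [hfp, lor_smul_right] at h
      field_simp at h ⊢
      linarith [h]
    · have h := hf x νm
      rw [hfm, lor_smul_right] at h
      have hli : l⁻¹ ≠ 0 := by positivity
      field_simp at h ⊢
      linarith [h]
  have e1 := hinv 1
  have e2 := hinv 2
  have hz1 : (f ^ (1:ℤ)) C = f C := by simp
  have hz2 : (f ^ (2:ℤ)) C = f (f C) := by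
    rw [show (2:ℤ) = 1 + 1 by norm_num, zpow_add_one f 1]
    rfl
  rw [hz1, lor_add_right, lor_add_right, (key C).1, (key C).2] at e1
  rw [hz2, lor_add_right, lor_add_right, (key (f C)).1, (key (f C)).2,
    (key C).1, (key C).2] at e2
  set a := lor C νp
  set b := lor C νm
  have hlne : l ≠ 0 := ne_of_gt hl0
  have e1' : l * (a + b) = a + l * l * b := by
    field_simp at e1; linarith
  have e2' : l * l * (a + b) = a + l * l * (l * l) * b := by
    field_simp at e2; linarith
  have hl1 : l - 1 ≠ 0 := by linarith
  have h1 : a * (l - 1) = (l * b) * (l - 1) := by linear_combination e1'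
  have haeq : a = l * b := mul_right_cancel₀ hl1 h1
  have hb' : b * (l * (l - 1) ^ 2 * (l + 1)) = 0 := by
    linear_combination (-1 : ℝ) * e2' + (l * l - 1) * haeq
  have hpos : 0 < l * (l - 1) ^ 2 * (l + 1) := by nlinarith
  have hb : b = 0 := (mul_eq_zero.mp hb').resolve_right (ne_of_gt hpos)
  have ha : a = 0 := by rw [haeq, hb, mul_zero]
  exact ⟨ha, hb⟩
end

section
/- Let X be a set, f : X → X a bijection, λ > 1, and h : X → ℝ a nonnegative function satisfying h(f(x)) + h(f⁻¹(x)) = (λ + λ⁻¹)h(x) for all x. If x ∈ X is f-periodic (fⁿ(x) = x for some n ≥ 1), then h(x) = 0. -/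
/-!
Along the orbit of `x`, the sequence `a k = h (fᵏ x)` obeys the linear recurrence
`a (k + 1) + a (k - 1) = (λ + λ⁻¹) a k`, whose characteristic roots are `λ` and `λ⁻¹`.
Hence `a n + a (-n) = (λⁿ + λ⁻ⁿ) a 0`. If `fⁿ x = x`, the left side is `2 h x`, while
`λⁿ + λ⁻ⁿ > 2`, so `h x = 0`.
-/

theorem add_apply_neg_eq_pow_add_pow_mul_of_recurrence {R : Type*} [CommRing R]
    {a : ℤ → R} {u v : R} (huv : u * v = 1)
    (hrec : ∀ k, a (k + 1) + a (k - 1) = (u + v) * a k) (m : ℕ) :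
    a m + a (-m) = (u ^ m + v ^ m) * a 0 := by
  induction m using Nat.twoStepInduction with
  | zero => simp only [Nat.cast_zero, neg_zero, pow_zero]; ring
  | one => simpa using hrec 0
  | more n ih₀ ih₁ =>
    have hfwd : a (n + 2) + a n = (u + v) * a (n + 1) := by
      convert hrec (n + 1) using 3 <;> ring
    have hbwd : a (-n) + a (-(n + 2)) = (u + v) * a (-(n + 1)) := by
      convert hrec (-(n + 1)) using 3 <;> ring
    push_cast at ih₀ ih₁ ⊢
    linear_combination hfwd + hbwd + (u + v) * ih₁ - ih₀ + (u ^ n + v ^ n) * a 0 * huv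

theorem Equiv.Perm.apply_zpow_add_one_add_apply_zpow_sub_one {X R : Type*} [Add R] [Mul R]
    (f : Equiv.Perm X) (h : X → R) {c : R} (x : X)
    (hfe : ∀ y, h (f y) + h (f.symm y) = c * h y) (k : ℤ) :
    h ((f ^ (k + 1)) x) + h ((f ^ (k - 1)) x) = c * h ((f ^ k) x) := by
  rw [add_comm k, sub_eq_neg_add, zpow_add, zpow_add, zpow_one, zpow_neg_one,
    Perm.mul_apply, Perm.mul_apply, Perm.inv_def]
  exact hfe _

theorem Equiv.Perm.zpow_neg_natCast_apply_of_pow_apply_eq {X : Type*} {f : Equiv.Perm X}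
    {x : X} {n : ℕ} (hx : (f ^ n) x = x) : (f ^ (-(n : ℤ))) x = x := by
  rw [zpow_neg, zpow_natCast, Perm.inv_eq_iff_eq, hx]

theorem two_lt_add_inv_of_one_lt {t : ℝ} (ht : 1 < t) : 2 < t + t⁻¹ := by
  have ht₀ : 0 < t := by linarith
  have : 2 * t < t * t + 1 := by nlinarith
  calc 2 = 2 * t / t := by field_simp
    _ < (t * t + 1) / t := by gcongr
    _ = t + t⁻¹ := by field_simp

theorem canonical_height_eq_zero_of_periodic_general {X : Type*} (f : X ≃ X) (l : ℝ) (hl : 1 < l)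
    (h : X → ℝ)
    (hfe : ∀ x, h (f x) + h (f.symm x) = (l + l⁻¹) * h x)
    (x : X) (hper : ∃ n : ℕ, 1 ≤ n ∧ (f ^ n) x = x) :
    h x = 0 := by
  obtain ⟨n, hn, hx⟩ := hper
  have hsum := add_apply_neg_eq_pow_add_pow_mul_of_recurrence (a := fun k : ℤ ↦ h ((f ^ k) x))
    (mul_inv_cancel₀ (by positivity))
    (Equiv.Perm.apply_zpow_add_one_add_apply_zpow_sub_one f h x hfe) n
  simp only [zpow_natCast, hx, Equiv.Perm.zpow_neg_natCast_apply_of_pow_apply_eq hx, zpow_zero,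
    Equiv.Perm.one_apply] at hsum
  have hgt : 2 < l ^ n + l⁻¹ ^ n := by
    rw [inv_pow]
    exact two_lt_add_inv_of_one_lt (one_lt_pow₀ hl (by omega))
  have hprod : (l ^ n + l⁻¹ ^ n - 2) * h x = 0 := by linarith
  exact (mul_eq_zero.1 hprod).resolve_left (by linarith)

/-- Let `f : X → X` be a bijection, `λ > 1`, and `h : X → ℝ` a nonnegative function with
`h(f x) + h(f⁻¹ x) = (λ + λ⁻¹) h(x)` for all `x`. If `x` is `f`-periodic (`fⁿ x = x` for
some `n ≥ 1`), then `h(x) = 0`. -/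
theorem canonical_height_eq_zero_of_periodic {X : Type*} (f : X ≃ X) (l : ℝ) (hl : 1 < l)
    (h : X → ℝ) (hnn : ∀ x, 0 ≤ h x)
    (hfe : ∀ x, h (f x) + h (f.symm x) = (l + l⁻¹) * h x)
    (x : X) (hper : ∃ n : ℕ, 1 ≤ n ∧ (f ^ n) x = x) :
    h x = 0 :=
  canonical_height_eq_zero_of_periodic_general f l hl h hfe x hper
end

section
/- Let X be a set, f : X → X a bijection, λ > 1, and h, h' : X → ℝ two functions each satisfying g(f(x)) + g(f⁻¹(x)) = (λ + λ⁻¹)g(x) for all x. If h − h' is bounded, then h = h'. -/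
/-- Uniqueness of canonical heights: let `f : X → X` be a bijection, `λ > 1`, and let
`h, h' : X → ℝ` both satisfy `g(f x) + g(f⁻¹ x) = (λ + λ⁻¹) g(x)` for all `x`. If `h − h'`
is bounded, then `h = h'`. -/
theorem canonical_height_unique {X : Type*} (f : X ≃ X) (l : ℝ) (hl : 1 < l)
    (h h' : X → ℝ)
    (hfe : ∀ x, h (f x) + h (f.symm x) = (l + l⁻¹) * h x)
    (hfe' : ∀ x, h' (f x) + h' (f.symm x) = (l + l⁻¹) * h' x)
    (hb : ∃ C : ℝ, ∀ x, |h x - h' x| ≤ C) :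
    h = h' := by
  funext x
  haveI : Nonempty X := ⟨x⟩
  obtain ⟨C, hC⟩ := hb
  set d : X → ℝ := fun y => h y - h' y with hd
  have hl0 : (0:ℝ) < l := lt_trans one_pos hl
  have hll : (2:ℝ) < l + l⁻¹ := by
    have : 0 < l⁻¹ := inv_pos.mpr hl0
    have h2 : l * l⁻¹ = 1 := mul_inv_cancel₀ (ne_of_gt hl0)
    nlinarith [sq_nonneg (l - 1)]
  have hllpos : (0:ℝ) < l + l⁻¹ := by linarith
  have hde : ∀ y, d (f y) + d (f.symm y) = (l + l⁻¹) * d y := by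
    intro y
    simp only [hd]
    have := hfe y
    have := hfe' y
    ring_nf
    linarith [hfe y, hfe' y]
  have hbdd : BddAbove (Set.range fun y => |d y|) := ⟨C, by rintro _ ⟨y, rfl⟩; exact hC y⟩
  set M : ℝ := ⨆ y, |d y| with hM
  have hle : ∀ y, |d y| ≤ M := fun y => le_ciSup hbdd y
  have hkey : M ≤ 2 * M / (l + l⁻¹) := by
    apply ciSup_le
    intro y
    rw [le_div_iff₀ hllpos]
    calc |d y| * (l + l⁻¹) = |(l + l⁻¹) * d y| := by
          rw [abs_mul, abs_of_pos hllpos]; ring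
      _ = |d (f y) + d (f.symm y)| := by rw [hde y]
      _ ≤ |d (f y)| + |d (f.symm y)| := abs_add_le _ _
      _ ≤ 2 * M := by linarith [hle (f y), hle (f.symm y)]
  have hM0 : M ≤ 0 := by
    rw [le_div_iff₀ hllpos] at hkey
    nlinarith
  have := hle x
  have : |d x| ≤ 0 := le_trans this hM0
  have : d x = 0 := abs_nonpos_iff.mp this
  simpa [hd, sub_eq_zero] using this
end

section
/- Let X be a set, f : X → X a bijection, λ > 1, and ĥ₊, ĥ₋ : X → ℝ functions with ĥ₊∘f = λ·ĥ₊ and ĥ₋∘f = λ⁻¹·ĥ₋. Suppose ĥ := ĥ₊ + ĥ₋ is nonnegative on X. Then ĥ₊(x) ≥ 0 and ĥ₋(x) ≥ 0 for all x ∈ X. -/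
open Filter Topology

theorem apply_iterate_eq_pow_mul {X M : Type*} [Monoid M] {f : X → X} {h : X → M} {c : M}
    (hf : ∀ x, h (f x) = c * h x) (n : ℕ) (x : X) : h (f^[n] x) = c ^ n * h x := by
  rw [(Function.Semiconj.iterate_right hf n) x, mul_left_iterate]

theorem apply_symm_eq_inv_mul {X K : Type*} [GroupWithZero K] {f : X ≃ X} {h : X → K} {c : K}
    (hc : c ≠ 0) (hf : ∀ x, h (f x) = c * h x) (x : X) : h (f.symm x) = c⁻¹ * h x := by
  rw [← f.apply_symm_apply x, hf, f.apply_symm_apply, inv_mul_cancel_left₀ hc]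

/-- `hp x = l⁻ⁿ hp (fⁿ x) ≥ -l⁻ⁿ hm (fⁿ x) = -l⁻²ⁿ hm x`, and the right-hand side tends to `0`. -/
theorem nonneg_of_add_nonneg_of_expanding {X : Type*} {f : X → X} {l : ℝ} (hl : 1 < l)
    {hp hm : X → ℝ} (hfp : ∀ x, hp (f x) = l * hp x) (hfm : ∀ x, hm (f x) = l⁻¹ * hm x)
    (hnn : ∀ x, 0 ≤ hp x + hm x) (x : X) : 0 ≤ hp x := by
  have hl0 : 0 < l := zero_lt_one.trans hl
  have bound : ∀ n : ℕ, -((l⁻¹ ^ 2) ^ n * hm x) ≤ hp x := by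
    intro n
    have h := hnn (f^[n] x)
    rw [apply_iterate_eq_pow_mul hfp, apply_iterate_eq_pow_mul hfm] at h
    have hscaled := mul_nonneg (pow_pos (inv_pos.2 hl0) n).le h
    have hscaled_eq : l⁻¹ ^ n * (l ^ n * hp x + l⁻¹ ^ n * hm x) = hp x + (l⁻¹ ^ 2) ^ n * hm x := by
      rw [mul_add, ← mul_assoc, ← mul_pow, inv_mul_cancel₀ hl0.ne', one_pow, one_mul,
        ← mul_assoc, ← mul_pow, ← sq]
    linarith
  have hsq : l⁻¹ ^ 2 < 1 := pow_lt_one₀ (by positivity) (inv_lt_one_of_one_lt₀ hl) two_ne_zero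
  have hlim : Tendsto (fun n : ℕ => -((l⁻¹ ^ 2) ^ n * hm x)) atTop (𝓝 0) := by
    simpa using ((tendsto_pow_atTop_nhds_zero_of_lt_one (by positivity) hsq).mul_const (hm x)).neg
  exact le_of_tendsto' hlim bound

/-- Let `f : X → X` be a bijection, `λ > 1`, and `ĥ₊, ĥ₋ : X → ℝ` with `ĥ₊ ∘ f = λ ĥ₊` and
`ĥ₋ ∘ f = λ⁻¹ ĥ₋`. If `ĥ := ĥ₊ + ĥ₋` is nonnegative on `X`, then `ĥ₊ ≥ 0` and `ĥ₋ ≥ 0`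
everywhere. -/
theorem canonical_height_parts_nonneg {X : Type*} (f : X ≃ X) (l : ℝ) (hl : 1 < l)
    (hp hm : X → ℝ)
    (hfp : ∀ x, hp (f x) = l * hp x) (hfm : ∀ x, hm (f x) = l⁻¹ * hm x)
    (hnn : ∀ x, 0 ≤ hp x + hm x) :
    ∀ x, 0 ≤ hp x ∧ 0 ≤ hm x := by
  have hl0 : l ≠ 0 := (zero_lt_one.trans hl).ne'
  have hfm_symm : ∀ x, hm (f.symm x) = l * hm x := fun x => by
    rw [apply_symm_eq_inv_mul (inv_ne_zero hl0) hfm, inv_inv]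
  have hnn_symm : ∀ x, 0 ≤ hm x + hp x := fun x => add_comm (hp x) (hm x) ▸ hnn x
  exact fun x => ⟨nonneg_of_add_nonneg_of_expanding hl hfp hfm hnn x,
    nonneg_of_add_nonneg_of_expanding hl hfm_symm (apply_symm_eq_inv_mul hl0 hfp) hnn_symm x⟩
end
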